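/- If Π ⊢ G : ⟨φ,Λ⟩ is derivable for a ground g-choreography G, then for every maximal configuration x ∈ MaxC(⟦G⟧) and every participant A, the set of maximal events of the projection x↾A is either empty or a singleton. -/

import Mathlib

open scoped Classical

namespace Choreo

/-! ## Labels -/

/-- Communication labels: output `A B!m` and input `A B?m`. -/
inductive Label (P M : Type) where
  | out : P → P → M → Label P M
  | inp : P → P → M → Label P M

variable {P M : Type}

/-- The subject of a label: the sender of an output, the receiver of an input. -/
def Label.sbj : Label P M → P
  | .out a _ _ => a
  | .inp _ b _ => b

/-- The set `L^!` of output labels (sender and receiver distinct). -/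
def Lout : Set (Label P M) := {l | ∃ a b m, a ≠ b ∧ l = .out a b m}

/-- The set `L^?` of input labels (sender and receiver distinct). -/
def Lin : Set (Label P M) := {l | ∃ a b m, a ≠ b ∧ l = .inp a b m}

/-- `L̂(A)`: the labels in `L` whose subject is `A`. -/
def hat (L : Set (Label P M)) (A : P) : Set (Label P M) := {l ∈ L | l.sbj = A}

/-- `sbj(L)`: the set of subjects of the labels in `L`. -/
def sbjSet (L : Set (Label P M)) : Set P := Label.sbj '' L

/-- `L − Π`: the labels in `L` whose subject is not in `Π`. -/
def lminus (L : Set (Label P M)) (Γ : Set P) : Set (Label P M) := {l ∈ L | l.sbj ∉ Γ}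

/-! ## Labelled event structures (events drawn from ℕ) -/

/-- Data of a labelled (prime) event structure over events drawn from `ℕ`. -/
structure ES (P M : Type) where
  ev : Set ℕ
  le : ℕ → ℕ → Prop
  conf : ℕ → ℕ → Prop
  lbl : ℕ → Label P M

namespace ES

variable (E : ES P M)

/-- Configurations: downward-closed conflict-free sets of events. -/
def Config (x : Set ℕ) : Prop :=
  x ⊆ E.ev ∧ (∀ e ∈ x, ∀ f ∈ E.ev, E.le f e → f ∈ x) ∧
    ∀ e ∈ x, ∀ f ∈ x, ¬ E.conf e f

/-- `MaxC E`: the ⊆-maximal configurations of `E`. -/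
def MaxC : Set (Set ℕ) := {x | E.Config x ∧ ∀ y, E.Config y → x ⊆ y → y = x}

/-- Minimal events of `s ⊆ E.ev` with respect to `E.le`. -/
def minIn (s : Set ℕ) : Set ℕ := {e ∈ s | ∀ f ∈ s, E.le f e → f = e}

/-- Maximal events of `s ⊆ E.ev` with respect to `E.le`. -/
def maxIn (s : Set ℕ) : Set ℕ := {e ∈ s | ∀ f ∈ s, E.le e f → f = e}

def minEv : Set ℕ := E.minIn E.ev
def maxEv : Set ℕ := E.maxIn E.ev

/-- Labels of the minimal events of `E`. -/
def minLbl : Set (Label P M) := E.lbl '' E.minEv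

/-- Labels of the maximal events of `E`. -/
def maxLbl : Set (Label P M) := E.lbl '' E.maxEv

/-- All labels occurring in `E`. -/
def lblSet : Set (Label P M) := E.lbl '' E.ev

/-- The projection `E↾A`: the restriction of `E` to the events whose label has subject `A`. -/
def proj (A : P) : ES P M where
  ev := {e ∈ E.ev | (E.lbl e).sbj = A}
  le u v := E.le u v ∧ (u ∈ E.ev ∧ (E.lbl u).sbj = A) ∧ (v ∈ E.ev ∧ (E.lbl v).sbj = A)
  conf u v := E.conf u v ∧ (u ∈ E.ev ∧ (E.lbl u).sbj = A) ∧ (v ∈ E.ev ∧ (E.lbl v).sbj = A)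
  lbl := E.lbl

/-- The projection `x↾A` of a configuration (as a set of events of `E`). -/
def projC (x : Set ℕ) (A : P) : Set ℕ := {e ∈ x | (E.lbl e).sbj = A}

end ES

/-! ## Constructions on event structures -/

/-- Tag for the events of a left component. -/
def tagL (e : ℕ) : ℕ := Nat.pair 0 e
/-- Tag for the events of a right component. -/
def tagR (e : ℕ) : ℕ := Nat.pair 1 e
/-- Tag for the events of the copy of the second component indexed by (the code of) a
maximal configuration of the first one. -/
def tagC (k e : ℕ) : ℕ := Nat.pair 1 (Nat.pair k e)

/-- A code (injective on finite sets) of sets of naturals. -/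
noncomputable def encSet (x : Set ℕ) : ℕ :=
  if h : x.Finite then h.toFinset.sum (fun n => 2 ^ n) else 0

/-- The empty event structure `ε`. -/
noncomputable def esEmpty [Nonempty P] [Nonempty M] : ES P M where
  ev := ∅
  le _ _ := False
  conf _ _ := False
  lbl _ := Label.out Classical.ofNonempty Classical.ofNonempty Classical.ofNonempty

/-- `⟦A→B:m⟧`: two ordered events labelled `A B!m < A B?m`. -/
def esAct (a b : P) (m : M) : ES P M where
  ev := {0, 1}
  le u v := (u = 0 ∧ v = 0) ∨ (u = 0 ∧ v = 1) ∨ (u = 1 ∧ v = 1)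
  conf _ _ := False
  lbl e := if e = 0 then Label.out a b m else Label.inp a b m

/-- Tensor product `E1 ⊗ E2` (componentwise disjoint union). -/
def esTensor (E1 E2 : ES P M) : ES P M where
  ev := (tagL '' E1.ev) ∪ (tagR '' E2.ev)
  le u v := (∃ e ∈ E1.ev, ∃ f ∈ E1.ev, E1.le e f ∧ u = tagL e ∧ v = tagL f) ∨
            (∃ e ∈ E2.ev, ∃ f ∈ E2.ev, E2.le e f ∧ u = tagR e ∧ v = tagR f)
  conf u v := (∃ e ∈ E1.ev, ∃ f ∈ E1.ev, E1.conf e f ∧ u = tagL e ∧ v = tagL f) ∨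
              (∃ e ∈ E2.ev, ∃ f ∈ E2.ev, E2.conf e f ∧ u = tagR e ∧ v = tagR f)
  lbl u := if (Nat.unpair u).1 = 0 then E1.lbl (Nat.unpair u).2 else E2.lbl (Nat.unpair u).2

/-- Sum `E1 + E2`: disjoint union with all cross pairs of events in conflict. -/
def esSum (E1 E2 : ES P M) : ES P M :=
  { esTensor E1 E2 with
    conf := fun u v => (esTensor E1 E2).conf u v ∨
      (∃ e ∈ E1.ev, ∃ f ∈ E2.ev, (u = tagL e ∧ v = tagR f) ∨ (u = tagR f ∧ v = tagL e)) }

/-- Sequential composition: appends to each maximal configuration `x` of `E1` a disjoint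
copy of `E2`, ordering an event of `x` below an event of the copy whenever their labels
have the same subject. -/
noncomputable def esSeq (E1 E2 : ES P M) : ES P M where
  ev := (tagL '' E1.ev) ∪ {u | ∃ x ∈ E1.MaxC, ∃ e ∈ E2.ev, u = tagC (encSet x) e}
  le u v :=
    (∃ e ∈ E1.ev, ∃ f ∈ E1.ev, E1.le e f ∧ u = tagL e ∧ v = tagL f) ∨
    (∃ x ∈ E1.MaxC, ∃ e ∈ E2.ev, ∃ f ∈ E2.ev, E2.le e f ∧
       u = tagC (encSet x) e ∧ v = tagC (encSet x) f) ∨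
    (∃ x ∈ E1.MaxC, ∃ e ∈ x, ∃ f ∈ E2.ev, (E1.lbl e).sbj = (E2.lbl f).sbj ∧
       u = tagL e ∧ v = tagC (encSet x) f)
  conf u v :=
    (∃ e ∈ E1.ev, ∃ f ∈ E1.ev, E1.conf e f ∧ u = tagL e ∧ v = tagL f) ∨
    (∃ x ∈ E1.MaxC, ∃ e ∈ E2.ev, ∃ f ∈ E2.ev, E2.conf e f ∧
       u = tagC (encSet x) e ∧ v = tagC (encSet x) f) ∨
    (∃ x ∈ E1.MaxC, ∃ x' ∈ E1.MaxC, x ≠ x' ∧ ∃ e ∈ E2.ev, ∃ f ∈ E2.ev,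
       u = tagC (encSet x) e ∧ v = tagC (encSet x') f) ∨
    (∃ x ∈ E1.MaxC, ∃ e ∈ E1.ev, (∃ e' ∈ x, E1.conf e e') ∧ ∃ f ∈ E2.ev,
       ((u = tagL e ∧ v = tagC (encSet x) f) ∨ (u = tagC (encSet x) f ∧ v = tagL e)))
  lbl u := if (Nat.unpair u).1 = 0 then E1.lbl (Nat.unpair u).2
           else E2.lbl (Nat.unpair (Nat.unpair u).2).2

/-! ## Well-branchedness -/

/-- Labels of the minimal events of the projection `E↾A`. -/
def minLblP (E : ES P M) (A : P) : Set (Label P M) := (E.proj A).minLbl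

/-- `A` is active for the branches `E1`, `E2`. -/
def active (E1 E2 : ES P M) (A : P) : Prop :=
  minLblP E1 A ≠ ∅ ∧ minLblP E2 A ≠ ∅ ∧
  Disjoint (minLblP E1 A) (minLblP E2 A) ∧
  minLblP E1 A ∪ minLblP E2 A ⊆ Lout

/-- `B` is passive for the branches `E1`, `E2`. -/
def passive (E1 E2 : ES P M) (B : P) : Prop :=
  Disjoint (minLblP E1 B) (minLblP E2 B) ∧
  minLblP E1 B ∪ minLblP E2 B ⊆ Lin ∧
  (minLblP E1 B = ∅ ↔ minLblP E2 B = ∅)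

/-- Well-branchedness: a unique active participant, all other participants passive. -/
def wb (E1 E2 : ES P M) : Prop :=
  ∃ A, active E1 E2 A ∧ (∀ A', active E1 E2 A' → A' = A) ∧
    ∀ B, B ≠ A → passive E1 E2 B

/-! ## Ground g-choreographies and their semantics -/

/-- Ground g-choreographies: `G ::= 0 | A→B:m | G;G | G|G | G+G`. -/
inductive GC (P M : Type) where
  | nil : GC P M
  | act : P → P → M → GC P M
  | seq : GC P M → GC P M → GC P M
  | par : GC P M → GC P M → GC P M
  | cho : GC P M → GC P M → GC P M

/-- `P(G)`: the participants occurring in `G`. -/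
def parts : GC P M → Set P
  | .nil => ∅
  | .act a b _ => {a, b}
  | .seq g1 g2 => parts g1 ∪ parts g2
  | .par g1 g2 => parts g1 ∪ parts g2
  | .cho g1 g2 => parts g1 ∪ parts g2

/-- The semantics `⟦G⟧`: a labelled event structure, or `none` (i.e. `⊥`) when a side
condition fails (the grammar requires `A ≠ B` in interactions; parallel requires disjoint
label sets; choice requires well-branchedness). -/
noncomputable def gsem [Nonempty P] [Nonempty M] : GC P M → Option (ES P M)
  | .nil => some esEmpty
  | .act a b m => if a = b then none else some (esAct a b m)
  | .seq g1 g2 =>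
      match gsem g1, gsem g2 with
      | some E1, some E2 => some (esSeq E1 E2)
      | _, _ => none
  | .par g1 g2 =>
      match gsem g1, gsem g2 with
      | some E1, some E2 =>
          if Disjoint E1.lblSet E2.lblSet then some (esTensor E1 E2) else none
      | _, _ => none
  | .cho g1 g2 =>
      match gsem g1, gsem g2 with
      | some E1, some E2 => if wb E1 E2 then some (esSum E1 E2) else none
      | _, _ => none

/-! ## The typing system -/

/-- Output uniform sets of labels. -/
def outUniform (U V : Set (Label P M)) : Prop := Disjoint U V ∧ U ∪ V ⊆ Lout

/-- Input uniform sets of labels. -/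
def inUniform (U V : Set (Label P M)) : Prop := Disjoint U V ∧ U ∪ V ⊆ Lin

/-- The compatibility condition `compch(φ1,φ2,Π)` of rule t-ch. -/
def compch (φ1 φ2 : Set (Label P M)) (Γ : Set P) : Prop :=
  ∃ A ∈ Γ,
    (outUniform (hat φ1 A) (hat φ2 A) ∧ hat φ1 A ≠ ∅ ∧ hat φ2 A ≠ ∅) ∧
    (∀ A' ∈ Γ, (outUniform (hat φ1 A') (hat φ2 A') ∧ hat φ1 A' ≠ ∅ ∧ hat φ2 A' ≠ ∅) →
        A' = A) ∧
    ∀ B ∈ Γ, B ≠ A →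
      inUniform (hat φ1 B) (hat φ2 B) ∧ (hat φ1 B = ∅ ↔ hat φ2 B = ∅)

/-- The typing judgement `Π ⊢ G : ⟨φ,Λ⟩`. -/
inductive Typing : Set P → GC P M → Set (Label P M) → Set (Label P M) → Prop where
  | temp : Typing ∅ GC.nil ∅ ∅
  | tint {a b : P} {m : M} (hab : a ≠ b) :
      Typing {a, b} (GC.act a b m)
        {Label.out a b m, Label.inp a b m} {Label.out a b m, Label.inp a b m}
  | tseq {Γ1 Γ2 : Set P} {g1 g2 : GC P M} {φ1 φ2 Λ1 Λ2 : Set (Label P M)} :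
      Typing Γ1 g1 φ1 Λ1 → Typing Γ2 g2 φ2 Λ2 →
      Typing (Γ1 ∪ Γ2) (GC.seq g1 g2) (φ1 ∪ lminus φ2 Γ1) (Λ2 ∪ lminus Λ1 Γ2)
  | tpar {Γ1 Γ2 : Set P} {g1 g2 : GC P M} {φ1 φ2 Λ1 Λ2 : Set (Label P M)} :
      Typing Γ1 g1 φ1 Λ1 → Typing Γ2 g2 φ2 Λ2 → Γ1 ∩ Γ2 = ∅ →
      Typing (Γ1 ∪ Γ2) (GC.par g1 g2) (φ1 ∪ φ2) (Λ1 ∪ Λ2)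
  | tch {Γ : Set P} {g1 g2 : GC P M} {φ1 φ2 Λ1 Λ2 : Set (Label P M)} :
      Typing Γ g1 φ1 Λ1 → Typing Γ g2 φ2 Λ2 → compch φ1 φ2 Γ →
      Typing Γ (GC.cho g1 g2) (φ1 ∪ φ2) (Λ1 ∪ Λ2)


/-! ## One-hole contexts and their typing (hole axiom `Γh ⊢ [·] : ⟨φh,Λh⟩`) -/

/-- g-choreography contexts with a single hole. -/
inductive Ctx (P M : Type) where
  | hole : Ctx P M
  | seqL : Ctx P M → GC P M → Ctx P M
  | seqR : GC P M → Ctx P M → Ctx P M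
  | parL : Ctx P M → GC P M → Ctx P M
  | parR : GC P M → Ctx P M → Ctx P M
  | choL : Ctx P M → GC P M → Ctx P M
  | choR : GC P M → Ctx P M → Ctx P M

/-- `C.fill g = C[g]`, the replacement of the hole of `C` by `g`. -/
def Ctx.fill : Ctx P M → GC P M → GC P M
  | .hole, g => g
  | .seqL c g2, g => GC.seq (c.fill g) g2
  | .seqR g1 c, g => GC.seq g1 (c.fill g)
  | .parL c g2, g => GC.par (c.fill g) g2
  | .parR g1 c, g => GC.par g1 (c.fill g)
  | .choL c g2, g => GC.cho (c.fill g) g2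
  | .choR g1 c, g => GC.cho g1 (c.fill g)

/-- Typing of one-hole contexts in the type system extended with the axiom
`Γh ⊢ [·] : ⟨φh,Λh⟩` for the hole. -/
inductive CTyping (Γh : Set P) (φh Λh : Set (Label P M)) :
    Set P → Ctx P M → Set (Label P M) → Set (Label P M) → Prop where
  | hole : CTyping Γh φh Λh Γh Ctx.hole φh Λh
  | seqL {Γ1 Γ2 : Set P} {c : Ctx P M} {g : GC P M} {φ1 φ2 Λ1 Λ2 : Set (Label P M)} :
      CTyping Γh φh Λh Γ1 c φ1 Λ1 → Typing Γ2 g φ2 Λ2 →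
      CTyping Γh φh Λh (Γ1 ∪ Γ2) (Ctx.seqL c g) (φ1 ∪ lminus φ2 Γ1) (Λ2 ∪ lminus Λ1 Γ2)
  | seqR {Γ1 Γ2 : Set P} {g : GC P M} {c : Ctx P M} {φ1 φ2 Λ1 Λ2 : Set (Label P M)} :
      Typing Γ1 g φ1 Λ1 → CTyping Γh φh Λh Γ2 c φ2 Λ2 →
      CTyping Γh φh Λh (Γ1 ∪ Γ2) (Ctx.seqR g c) (φ1 ∪ lminus φ2 Γ1) (Λ2 ∪ lminus Λ1 Γ2)
  | parL {Γ1 Γ2 : Set P} {c : Ctx P M} {g : GC P M} {φ1 φ2 Λ1 Λ2 : Set (Label P M)} :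
      CTyping Γh φh Λh Γ1 c φ1 Λ1 → Typing Γ2 g φ2 Λ2 → Γ1 ∩ Γ2 = ∅ →
      CTyping Γh φh Λh (Γ1 ∪ Γ2) (Ctx.parL c g) (φ1 ∪ φ2) (Λ1 ∪ Λ2)
  | parR {Γ1 Γ2 : Set P} {g : GC P M} {c : Ctx P M} {φ1 φ2 Λ1 Λ2 : Set (Label P M)} :
      Typing Γ1 g φ1 Λ1 → CTyping Γh φh Λh Γ2 c φ2 Λ2 → Γ1 ∩ Γ2 = ∅ →
      CTyping Γh φh Λh (Γ1 ∪ Γ2) (Ctx.parR g c) (φ1 ∪ φ2) (Λ1 ∪ Λ2)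
  | choL {Γ : Set P} {c : Ctx P M} {g : GC P M} {φ1 φ2 Λ1 Λ2 : Set (Label P M)} :
      CTyping Γh φh Λh Γ c φ1 Λ1 → Typing Γ g φ2 Λ2 → compch φ1 φ2 Γ →
      CTyping Γh φh Λh Γ (Ctx.choL c g) (φ1 ∪ φ2) (Λ1 ∪ Λ2)
  | choR {Γ : Set P} {g : GC P M} {c : Ctx P M} {φ1 φ2 Λ1 Λ2 : Set (Label P M)} :
      Typing Γ g φ1 Λ1 → CTyping Γh φh Λh Γ c φ2 Λ2 → compch φ1 φ2 Γ →
      CTyping Γh φh Λh Γ (Ctx.choR g c) (φ1 ∪ φ2) (Λ1 ∪ Λ2)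

/-! ## Refinable actions, t-ref, and refinement -/

/-- The three side conditions of the axiom schema t-ref for the refinable action
`A → m1…mn : B1,…,Bn`, represented by the initiator `A` and the nonempty list
`l = [(m1,B1),…,(mn,Bn)]` with pairwise distinct `Bi`. -/
def trefCond (Γ : Set P) (φ Λ : Set (Label P M)) (A : P) (l : List (M × P)) : Prop :=
  l ≠ [] ∧ (l.map Prod.snd).Nodup ∧
  sbjSet φ = Γ ∧ sbjSet Λ = Γ ∧ sbjSet (φ ∩ Lout) = {A} ∧
  ∀ p ∈ l, ∃ C ∈ Γ, hat Λ p.2 = {Label.inp C p.2 p.1}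

/-- `G ref A→m1…mn:B1,…,Bn`: the ground g-choreography `G` refines the refinable action
given by initiator `A` and list `l = [(m1,B1),…,(mn,Bn)]`. -/
def Refines [Nonempty P] [Nonempty M] (G : GC P M) (A : P) (l : List (M × P)) : Prop :=
  ∃ E : ES P M, gsem G = some E ∧
    sbjSet E.minLbl = {A} ∧
    ∀ x ∈ E.MaxC, ∀ p ∈ l, ∃ C ∈ parts G,
      Label.inp C p.2 p.1 ∈ E.lbl '' (E.maxIn (E.projC x p.2))

/-! ## Multi-hole contexts -/

/-- g-choreography contexts with (numbered) holes. -/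
inductive MCtx (P M : Type) where
  | hole : ℕ → MCtx P M
  | nil : MCtx P M
  | act : P → P → M → MCtx P M
  | seq : MCtx P M → MCtx P M → MCtx P M
  | par : MCtx P M → MCtx P M → MCtx P M
  | cho : MCtx P M → MCtx P M → MCtx P M

/-- The (indices of the) holes occurring in a multi-hole context. -/
def MCtx.holes : MCtx P M → List ℕ
  | .hole i => [i]
  | .nil => []
  | .act _ _ _ => []
  | .seq c1 c2 => c1.holes ++ c2.holes
  | .par c1 c2 => c1.holes ++ c2.holes
  | .cho c1 c2 => c1.holes ++ c2.holes

/-- `C.fill g`: replace each hole `[·]i` by `g i`. -/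
def MCtx.fill : MCtx P M → (ℕ → GC P M) → GC P M
  | .hole i, g => g i
  | .nil, _ => GC.nil
  | .act a b m, _ => GC.act a b m
  | .seq c1 c2, g => GC.seq (c1.fill g) (c2.fill g)
  | .par c1 c2, g => GC.par (c1.fill g) (c2.fill g)
  | .cho c1 c2, g => GC.cho (c1.fill g) (c2.fill g)

/-- Typing of multi-hole contexts in the extended type system, where hole `i` is typed by
the axiom `(σ i).1 ⊢ [·]i : ⟨(σ i).2.1, (σ i).2.2⟩`. -/
inductive MTyping (σ : ℕ → Set P × Set (Label P M) × Set (Label P M)) :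
    Set P → MCtx P M → Set (Label P M) → Set (Label P M) → Prop where
  | hole (i : ℕ) : MTyping σ (σ i).1 (MCtx.hole i) (σ i).2.1 (σ i).2.2
  | temp : MTyping σ ∅ MCtx.nil ∅ ∅
  | tint {a b : P} {m : M} (hab : a ≠ b) :
      MTyping σ {a, b} (MCtx.act a b m)
        {Label.out a b m, Label.inp a b m} {Label.out a b m, Label.inp a b m}
  | tseq {Γ1 Γ2 : Set P} {c1 c2 : MCtx P M} {φ1 φ2 Λ1 Λ2 : Set (Label P M)} :
      MTyping σ Γ1 c1 φ1 Λ1 → MTyping σ Γ2 c2 φ2 Λ2 →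
      MTyping σ (Γ1 ∪ Γ2) (MCtx.seq c1 c2) (φ1 ∪ lminus φ2 Γ1) (Λ2 ∪ lminus Λ1 Γ2)
  | tpar {Γ1 Γ2 : Set P} {c1 c2 : MCtx P M} {φ1 φ2 Λ1 Λ2 : Set (Label P M)} :
      MTyping σ Γ1 c1 φ1 Λ1 → MTyping σ Γ2 c2 φ2 Λ2 → Γ1 ∩ Γ2 = ∅ →
      MTyping σ (Γ1 ∪ Γ2) (MCtx.par c1 c2) (φ1 ∪ φ2) (Λ1 ∪ Λ2)
  | tch {Γ : Set P} {c1 c2 : MCtx P M} {φ1 φ2 Λ1 Λ2 : Set (Label P M)} :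
      MTyping σ Γ c1 φ1 Λ1 → MTyping σ Γ c2 φ2 Λ2 → compch φ1 φ2 Γ →
      MTyping σ Γ (MCtx.cho c1 c2) (φ1 ∪ φ2) (Λ1 ∪ Λ2)

/-!
The semantics of a typable choreography over participants `Γ` is `WellTyped Γ`: conflict is
symmetric and hereditary, all subjects lie in `Γ`, and any two events of a configuration with
the same subject are causally comparable. The last property survives `G1 | G2` because the
components have disjoint participants, and `G1 + G2` because a configuration stays inside one
branch. For `G1 ; G2`, a configuration meeting the copy of `⟦G2⟧` attached to the maximal
configuration `y` of `⟦G1⟧` has its `⟦G1⟧`-events in conflict with nothing in `y`, hence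
inside `y` by maximality, and those lie below every event of the copy with the same subject.
Two maximal events of `x↾A` are therefore comparable, hence equal.
-/

lemma tagL_injective : Function.Injective tagL := fun _ _ h => by
  simpa [tagL, Nat.pair_eq_pair] using h

lemma tagR_injective : Function.Injective tagR := fun _ _ h => by
  simpa [tagR, Nat.pair_eq_pair] using h

lemma tagC_inj {k e k' e' : ℕ} (h : tagC k e = tagC k' e') : k = k' ∧ e = e' :=
  Nat.pair_eq_pair.mp (Nat.pair_eq_pair.mp h).2

lemma tagL_ne_tagR {a b : ℕ} : tagL a ≠ tagR b := by
  simp [tagL, tagR, Nat.pair_eq_pair]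

lemma tagL_ne_tagC {a k e : ℕ} : tagL a ≠ tagC k e := by
  simp [tagL, tagC, Nat.pair_eq_pair]

namespace ES

variable {E E' : ES P M}

structure IsHom (E E' : ES P M) (t : ℕ → ℕ) : Prop where
  mem_ev : ∀ a ∈ E.ev, t a ∈ E'.ev
  le : ∀ a ∈ E.ev, ∀ b ∈ E.ev, E.le a b → E'.le (t a) (t b)
  conf : ∀ a ∈ E.ev, ∀ b ∈ E.ev, E.conf a b → E'.conf (t a) (t b)
  lbl : ∀ a, E'.lbl (t a) = E.lbl a

lemma Config.comap {t : ℕ → ℕ} (ht : IsHom E E' t) {x : Set ℕ} (hx : E'.Config x) :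
    E.Config {a ∈ E.ev | t a ∈ x} :=
  ⟨fun _ ha => ha.1,
   fun a ha b hb hba => ⟨hb, hx.2.1 _ ha.2 _ (ht.mem_ev b hb) (ht.le b hb a ha.1 hba)⟩,
   fun a ha b hb hab => hx.2.2 _ ha.2 _ hb.2 (ht.conf a ha.1 b hb.1 hab)⟩

def ProjTotal (E : ES P M) : Prop :=
  ∀ x, E.Config x → ∀ e ∈ x, ∀ f ∈ x,
    (E.lbl e).sbj = (E.lbl f).sbj → E.le e f ∨ E.le f e

lemma ProjTotal.maxIn_projC_subsingleton (hE : E.ProjTotal) {x : Set ℕ} (hx : E.Config x)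
    (A : P) : (E.maxIn (E.projC x A)).Subsingleton := by
  intro e he f hf
  rcases hE x hx e he.1.1 f hf.1.1 (he.1.2.trans hf.1.2.symm) with hef | hfe
  · exact (he.2 f hf.1 hef).symm
  · exact hf.2 e he.1 hfe

lemma IsHom.le_or_le {t : ℕ → ℕ} (ht : IsHom E E' t) (hE : E.ProjTotal) {x : Set ℕ}
    (hx : E'.Config x) {a b : ℕ} (ha : a ∈ E.ev) (hb : b ∈ E.ev)
    (hax : t a ∈ x) (hbx : t b ∈ x)
    (hab : (E'.lbl (t a)).sbj = (E'.lbl (t b)).sbj) : E'.le (t a) (t b) ∨ E'.le (t b) (t a) := by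
  rw [ht.lbl, ht.lbl] at hab
  exact (hE _ (Config.comap ht hx) a ⟨ha, hax⟩ b ⟨hb, hbx⟩ hab).imp
    (ht.le a ha b hb) (ht.le b hb a ha)

lemma conf_of_reflTransGen (hered : ∀ u v w, E.conf u v → E.le v w → E.conf u w)
    {u v w : ℕ} (huv : E.conf u v) (hvw : Relation.ReflTransGen E.le v w) : E.conf u w := by
  induction hvw with
  | refl => exact huv
  | tail _ hle ih => exact hered _ _ _ ih hle

/-- Otherwise adding the causes of `e` to `x` would give a larger configuration. -/
lemma mem_of_maxC_of_not_conf (hsymm : ∀ u v, E.conf u v → E.conf v u)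
    (hhered : ∀ u v w, E.conf u v → E.le v w → E.conf u w)
    {x : Set ℕ} (hx : x ∈ E.MaxC) {e : ℕ} (he : e ∈ E.ev)
    (hee : ¬ E.conf e e) (hxe : ∀ f ∈ x, ¬ E.conf f e) : e ∈ x := by
  set down := {f ∈ E.ev | Relation.ReflTransGen E.le f e}
  have hcfg : E.Config (x ∪ down) := by
    refine ⟨Set.union_subset hx.1.1 fun _ hf => hf.1, ?_, ?_⟩
    · rintro u (hu | hu) g hg hgu
      · exact Or.inl (hx.1.2.1 u hu g hg hgu)
      · exact Or.inr ⟨hg, Relation.ReflTransGen.head hgu hu.2⟩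
    · have down_conf : ∀ u ∈ down, ∀ v, E.conf u v → E.conf v e := fun u hu v huv =>
        conf_of_reflTransGen hhered (hsymm _ _ huv) hu.2
      rintro u (hu | hu) v (hv | hv) huv
      · exact hx.1.2.2 u hu v hv huv
      · exact hxe u hu (down_conf v hv u (hsymm _ _ huv))
      · exact hxe v hv (down_conf u hu v huv)
      · exact hee (down_conf v hv e (down_conf u hu v huv))
  rw [← hx.2 _ hcfg Set.subset_union_left]
  exact Or.inr ⟨he, Relation.ReflTransGen.refl⟩

end ES

open ES

structure WellTyped (Γ : Set P) (E : ES P M) : Prop where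
  conf_symm : ∀ u v, E.conf u v → E.conf v u
  conf_hered : ∀ u v w, E.conf u v → E.le v w → E.conf u w
  sbj_mem : ∀ e ∈ E.ev, (E.lbl e).sbj ∈ Γ
  projTotal : E.ProjTotal

section Constructions

variable {E1 E2 : ES P M}

lemma wellTyped_esEmpty [Nonempty P] [Nonempty M] :
    WellTyped (∅ : Set P) (esEmpty (P := P) (M := M)) where
  conf_symm _ _ h := h.elim
  conf_hered _ _ _ h _ := h.elim
  sbj_mem _ he := he.elim
  projTotal _ hx _ he _ _ _ := (hx.1 he).elim

lemma wellTyped_esAct {a b : P} (m : M) (hab : a ≠ b) : WellTyped {a, b} (esAct a b m) where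
  conf_symm _ _ h := h.elim
  conf_hered _ _ _ h _ := h.elim
  sbj_mem _ he := by
    rcases he with rfl | rfl <;> simp [esAct, Label.sbj]
  projTotal x hx e he f hf hef := by
    rcases hx.1 he with rfl | rfl <;> rcases hx.1 hf with rfl | rfl <;>
      simp_all [esAct, Label.sbj]

lemma isHom_tagL_esTensor : IsHom E1 (esTensor E1 E2) tagL where
  mem_ev a ha := Or.inl ⟨a, ha, rfl⟩
  le a ha b hb h := Or.inl ⟨a, ha, b, hb, h, rfl, rfl⟩
  conf a ha b hb h := Or.inl ⟨a, ha, b, hb, h, rfl, rfl⟩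
  lbl a := by simp [esTensor, tagL]

lemma isHom_tagR_esTensor : IsHom E2 (esTensor E1 E2) tagR where
  mem_ev a ha := Or.inr ⟨a, ha, rfl⟩
  le a ha b hb h := Or.inr ⟨a, ha, b, hb, h, rfl, rfl⟩
  conf a ha b hb h := Or.inr ⟨a, ha, b, hb, h, rfl, rfl⟩
  lbl a := by simp [esTensor, tagR]

lemma ES.IsHom.toEsSum {E : ES P M} {t : ℕ → ℕ} (ht : IsHom E (esTensor E1 E2) t) :
    IsHom E (esSum E1 E2) t where
  mem_ev := ht.mem_ev
  le := ht.le
  conf a ha b hb h := Or.inl (ht.conf a ha b hb h)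
  lbl := ht.lbl

lemma wellTyped_esTensor {Γ1 Γ2 : Set P} (h1 : WellTyped Γ1 E1) (h2 : WellTyped Γ2 E2)
    (hΓ : Γ1 ∩ Γ2 = ∅) : WellTyped (Γ1 ∪ Γ2) (esTensor E1 E2) where
  conf_symm := by
    rintro _ _ (⟨e, he, f, hf, hef, rfl, rfl⟩ | ⟨e, he, f, hf, hef, rfl, rfl⟩)
    · exact isHom_tagL_esTensor.conf f hf e he (h1.conf_symm _ _ hef)
    · exact isHom_tagR_esTensor.conf f hf e he (h2.conf_symm _ _ hef)
  conf_hered := by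
    rintro _ _ _ (⟨e, he, f, hf, hef, rfl, rfl⟩ | ⟨e, he, f, hf, hef, rfl, rfl⟩)
      (⟨f', -, g, hg, hfg, hff', rfl⟩ | ⟨f', -, g, hg, hfg, hff', rfl⟩)
    · obtain rfl := tagL_injective hff'
      exact isHom_tagL_esTensor.conf e he g hg (h1.conf_hered _ _ _ hef hfg)
    · exact absurd hff' tagL_ne_tagR
    · exact absurd hff'.symm tagL_ne_tagR
    · obtain rfl := tagR_injective hff'
      exact isHom_tagR_esTensor.conf e he g hg (h2.conf_hered _ _ _ hef hfg)
  sbj_mem := by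
    rintro _ (⟨e, he, rfl⟩ | ⟨e, he, rfl⟩)
    · rw [isHom_tagL_esTensor.lbl]; exact Or.inl (h1.sbj_mem e he)
    · rw [isHom_tagR_esTensor.lbl]; exact Or.inr (h2.sbj_mem e he)
  projTotal x hx := by
    have disjoint_sbj : ∀ e ∈ E1.ev, ∀ f ∈ E2.ev, (E1.lbl e).sbj ≠ (E2.lbl f).sbj :=
      fun e he f hf hef =>
        Set.eq_empty_iff_forall_notMem.mp hΓ _ ⟨h1.sbj_mem e he, hef ▸ h2.sbj_mem f hf⟩
    rintro _ he _ hf hef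
    rcases hx.1 he with ⟨e, he', rfl⟩ | ⟨e, he', rfl⟩ <;>
      rcases hx.1 hf with ⟨f, hf', rfl⟩ | ⟨f, hf', rfl⟩
    · exact isHom_tagL_esTensor.le_or_le h1.projTotal hx he' hf' he hf hef
    · rw [isHom_tagL_esTensor.lbl, isHom_tagR_esTensor.lbl] at hef
      exact absurd hef (disjoint_sbj e he' f hf')
    · rw [isHom_tagR_esTensor.lbl, isHom_tagL_esTensor.lbl] at hef
      exact absurd hef.symm (disjoint_sbj f hf' e he')
    · exact isHom_tagR_esTensor.le_or_le h2.projTotal hx he' hf' he hf hef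

lemma wellTyped_esSum {Γ : Set P} (h1 : WellTyped Γ E1) (h2 : WellTyped Γ E2) :
    WellTyped Γ (esSum E1 E2) where
  conf_symm := by
    rintro _ _ ((⟨e, he, f, hf, hef, rfl, rfl⟩ | ⟨e, he, f, hf, hef, rfl, rfl⟩) |
      ⟨e, he, f, hf, ⟨rfl, rfl⟩ | ⟨rfl, rfl⟩⟩)
    · exact isHom_tagL_esTensor.toEsSum.conf f hf e he (h1.conf_symm _ _ hef)
    · exact isHom_tagR_esTensor.toEsSum.conf f hf e he (h2.conf_symm _ _ hef)
    · exact Or.inr ⟨e, he, f, hf, Or.inr ⟨rfl, rfl⟩⟩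
    · exact Or.inr ⟨e, he, f, hf, Or.inl ⟨rfl, rfl⟩⟩
  conf_hered := by
    rintro _ _ _ ((⟨e, he, f, hf, hef, rfl, rfl⟩ | ⟨e, he, f, hf, hef, rfl, rfl⟩) |
      ⟨e, he, f, hf, ⟨rfl, rfl⟩ | ⟨rfl, rfl⟩⟩)
      (⟨f', -, g, hg, hfg, hff', rfl⟩ | ⟨f', -, g, hg, hfg, hff', rfl⟩)
    · obtain rfl := tagL_injective hff'
      exact isHom_tagL_esTensor.toEsSum.conf e he g hg (h1.conf_hered _ _ _ hef hfg)
    · exact absurd hff' tagL_ne_tagR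
    · exact absurd hff'.symm tagL_ne_tagR
    · obtain rfl := tagR_injective hff'
      exact isHom_tagR_esTensor.toEsSum.conf e he g hg (h2.conf_hered _ _ _ hef hfg)
    · exact absurd hff'.symm tagL_ne_tagR
    · exact Or.inr ⟨e, he, g, hg, Or.inl ⟨rfl, rfl⟩⟩
    · exact Or.inr ⟨g, hg, f, hf, Or.inr ⟨rfl, rfl⟩⟩
    · exact absurd hff' tagL_ne_tagR
  sbj_mem := by
    rintro _ (⟨e, he, rfl⟩ | ⟨e, he, rfl⟩)
    · rw [isHom_tagL_esTensor.toEsSum.lbl]; exact h1.sbj_mem e he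
    · rw [isHom_tagR_esTensor.toEsSum.lbl]; exact h2.sbj_mem e he
  projTotal x hx := by
    rintro _ he _ hf hef
    rcases hx.1 he with ⟨e, he', rfl⟩ | ⟨e, he', rfl⟩ <;>
      rcases hx.1 hf with ⟨f, hf', rfl⟩ | ⟨f, hf', rfl⟩
    · exact isHom_tagL_esTensor.toEsSum.le_or_le h1.projTotal hx he' hf' he hf hef
    · exact (hx.2.2 _ he _ hf (Or.inr ⟨e, he', f, hf', Or.inl ⟨rfl, rfl⟩⟩)).elim
    · exact (hx.2.2 _ he _ hf (Or.inr ⟨f, hf', e, he', Or.inr ⟨rfl, rfl⟩⟩)).elim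
    · exact isHom_tagR_esTensor.toEsSum.le_or_le h2.projTotal hx he' hf' he hf hef

lemma isHom_tagL_esSeq : IsHom E1 (esSeq E1 E2) tagL where
  mem_ev a ha := Or.inl ⟨a, ha, rfl⟩
  le a ha b hb h := Or.inl ⟨a, ha, b, hb, h, rfl, rfl⟩
  conf a ha b hb h := Or.inl ⟨a, ha, b, hb, h, rfl, rfl⟩
  lbl a := by simp [esSeq, tagL]

lemma isHom_tagC_esSeq {x : Set ℕ} (hx : x ∈ E1.MaxC) :
    IsHom E2 (esSeq E1 E2) (tagC (encSet x)) where
  mem_ev a ha := Or.inr ⟨x, hx, a, ha, rfl⟩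
  le a ha b hb h := Or.inr (Or.inl ⟨x, hx, a, ha, b, hb, h, rfl, rfl⟩)
  conf a ha b hb h := Or.inr (Or.inl ⟨x, hx, a, ha, b, hb, h, rfl, rfl⟩)
  lbl a := by simp [esSeq, tagC]

lemma esSeq_le_tagL {f w : ℕ} (h : (esSeq E1 E2).le (tagL f) w) :
    (∃ g ∈ E1.ev, E1.le f g ∧ w = tagL g) ∨
      ∃ x ∈ E1.MaxC, f ∈ x ∧ ∃ g ∈ E2.ev, w = tagC (encSet x) g := by
  rcases h with ⟨f', -, g, hg, hfg, hff', rfl⟩ | ⟨_, _, _, _, _, _, _, hff', -⟩ |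
    ⟨x, hx, f', hf'x, g, hg, -, hff', rfl⟩
  · obtain rfl := tagL_injective hff'
    exact Or.inl ⟨g, hg, hfg, rfl⟩
  · exact absurd hff' tagL_ne_tagC
  · obtain rfl := tagL_injective hff'
    exact Or.inr ⟨x, hx, hf'x, g, hg, rfl⟩

lemma esSeq_le_tagC {k f w : ℕ} (h : (esSeq E1 E2).le (tagC k f) w) :
    ∃ g ∈ E2.ev, E2.le f g ∧ w = tagC k g := by
  rcases h with ⟨_, _, _, _, _, hff', -⟩ | ⟨x, -, f', -, g, hg, hfg, hff', rfl⟩ |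
    ⟨_, _, _, _, _, _, _, hff', -⟩
  · exact absurd hff'.symm tagL_ne_tagC
  · obtain ⟨rfl, rfl⟩ := tagC_inj hff'
    exact ⟨g, hg, hfg, rfl⟩
  · exact absurd hff'.symm tagL_ne_tagC

lemma WellTyped.esSeq_conf_symm {Γ1 Γ2 : Set P} (h1 : WellTyped Γ1 E1) (h2 : WellTyped Γ2 E2)
    {u v : ℕ} (h : (esSeq E1 E2).conf u v) : (esSeq E1 E2).conf v u := by
  rcases h with ⟨e, he, f, hf, hef, rfl, rfl⟩ | ⟨x, hx, e, he, f, hf, hef, rfl, rfl⟩ |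
    ⟨x, hx, y, hy, hxy, e, he, f, hf, rfl, rfl⟩ |
    ⟨x, hx, e, he, hex, f, hf, ⟨rfl, rfl⟩ | ⟨rfl, rfl⟩⟩
  · exact isHom_tagL_esSeq.conf f hf e he (h1.conf_symm _ _ hef)
  · exact (isHom_tagC_esSeq hx).conf f hf e he (h2.conf_symm _ _ hef)
  · exact Or.inr (Or.inr (Or.inl ⟨y, hy, x, hx, hxy.symm, f, hf, e, he, rfl, rfl⟩))
  · exact Or.inr (Or.inr (Or.inr ⟨x, hx, e, he, hex, f, hf, Or.inr ⟨rfl, rfl⟩⟩))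
  · exact Or.inr (Or.inr (Or.inr ⟨x, hx, e, he, hex, f, hf, Or.inl ⟨rfl, rfl⟩⟩))

lemma WellTyped.esSeq_conf_hered {Γ1 Γ2 : Set P} (h1 : WellTyped Γ1 E1) (h2 : WellTyped Γ2 E2)
    {u v w : ℕ} (huv : (esSeq E1 E2).conf u v) (hvw : (esSeq E1 E2).le v w) :
    (esSeq E1 E2).conf u w := by
  rcases huv with ⟨e, he, f, hf, hef, rfl, rfl⟩ | ⟨x, hx, e, he, f, hf, hef, rfl, rfl⟩ |
    ⟨x, hx, y, hy, hxy, e, he, f, hf, rfl, rfl⟩ |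
    ⟨x, hx, e, he, ⟨e', he'x, hee'⟩, f, hf, ⟨rfl, rfl⟩ | ⟨rfl, rfl⟩⟩
  · rcases esSeq_le_tagL hvw with ⟨g, hg, hfg, rfl⟩ | ⟨z, hz, hfz, g, hg, rfl⟩
    · exact isHom_tagL_esSeq.conf e he g hg (h1.conf_hered _ _ _ hef hfg)
    · exact Or.inr (Or.inr (Or.inr
        ⟨z, hz, e, he, ⟨f, hfz, hef⟩, g, hg, Or.inl ⟨rfl, rfl⟩⟩))
  · obtain ⟨g, hg, hfg, rfl⟩ := esSeq_le_tagC hvw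
    exact (isHom_tagC_esSeq hx).conf e he g hg (h2.conf_hered _ _ _ hef hfg)
  · obtain ⟨g, hg, -, rfl⟩ := esSeq_le_tagC hvw
    exact Or.inr (Or.inr (Or.inl ⟨x, hx, y, hy, hxy, e, he, g, hg, rfl, rfl⟩))
  · obtain ⟨g, hg, -, rfl⟩ := esSeq_le_tagC hvw
    exact Or.inr (Or.inr (Or.inr
      ⟨x, hx, e, he, ⟨e', he'x, hee'⟩, g, hg, Or.inl ⟨rfl, rfl⟩⟩))
  · rcases esSeq_le_tagL hvw with ⟨g, hg, heg, rfl⟩ | ⟨z, hz, hez, g, hg, rfl⟩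
    · have hge' : E1.conf g e' :=
        h1.conf_symm _ _ (h1.conf_hered _ _ _ (h1.conf_symm _ _ hee') heg)
      exact Or.inr (Or.inr (Or.inr
        ⟨x, hx, g, hg, ⟨e', he'x, hge'⟩, f, hf, Or.inr ⟨rfl, rfl⟩⟩))
    · obtain rfl | hxz := eq_or_ne x z
      · exact (hx.1.2.2 e hez e' he'x hee').elim
      · exact Or.inr (Or.inr (Or.inl ⟨x, hx, z, hz, hxz, f, hf, g, hg, rfl, rfl⟩))

lemma WellTyped.mem_maxC_of_esSeq_config {Γ1 : Set P} (h1 : WellTyped Γ1 E1) {x : Set ℕ}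
    (hx : (esSeq E1 E2).Config x) {e : ℕ} (he : e ∈ E1.ev) (hex : tagL e ∈ x)
    {y : Set ℕ} (hy : y ∈ E1.MaxC) {f : ℕ} (hf : f ∈ E2.ev)
    (hfx : tagC (encSet y) f ∈ x) :
    e ∈ y :=
  mem_of_maxC_of_not_conf h1.conf_symm h1.conf_hered hy he
    (fun hee => hx.2.2 _ hex _ hex (isHom_tagL_esSeq.conf e he e he hee))
    (fun g hg hge => hx.2.2 _ hex _ hfx
      (Or.inr (Or.inr (Or.inr ⟨y, hy, e, he, ⟨g, hg, h1.conf_symm _ _ hge⟩, f, hf,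
        Or.inl ⟨rfl, rfl⟩⟩))))

lemma wellTyped_esSeq {Γ1 Γ2 : Set P} (h1 : WellTyped Γ1 E1) (h2 : WellTyped Γ2 E2) :
    WellTyped (Γ1 ∪ Γ2) (esSeq E1 E2) where
  conf_symm _ _ := h1.esSeq_conf_symm h2
  conf_hered _ _ _ := h1.esSeq_conf_hered h2
  sbj_mem := by
    rintro _ (⟨e, he, rfl⟩ | ⟨x, hx, e, he, rfl⟩)
    · rw [isHom_tagL_esSeq.lbl]; exact Or.inl (h1.sbj_mem e he)
    · rw [(isHom_tagC_esSeq hx).lbl]; exact Or.inr (h2.sbj_mem e he)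
  projTotal z hz := by
    rintro _ he _ hf hef
    rcases hz.1 he with ⟨e, he', rfl⟩ | ⟨x, hx, e, he', rfl⟩ <;>
      rcases hz.1 hf with ⟨f, hf', rfl⟩ | ⟨y, hy, f, hf', rfl⟩
    · exact isHom_tagL_esSeq.le_or_le h1.projTotal hz he' hf' he hf hef
    · rw [isHom_tagL_esSeq.lbl, (isHom_tagC_esSeq hy).lbl] at hef
      have hey := h1.mem_maxC_of_esSeq_config hz he' he hy hf' hf
      exact Or.inl (Or.inr (Or.inr ⟨y, hy, e, hey, f, hf', hef, rfl, rfl⟩))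
    · rw [(isHom_tagC_esSeq hx).lbl, isHom_tagL_esSeq.lbl] at hef
      have hfx := h1.mem_maxC_of_esSeq_config hz hf' hf hx he' he
      exact Or.inr (Or.inr (Or.inr ⟨x, hx, f, hfx, e, he', hef.symm, rfl, rfl⟩))
    · obtain rfl : x = y := by
        by_contra hxy
        exact hz.2.2 _ he _ hf
          (Or.inr (Or.inr (Or.inl ⟨x, hx, y, hy, hxy, e, he', f, hf', rfl, rfl⟩)))
      exact (isHom_tagC_esSeq hx).le_or_le h2.projTotal hz he' hf' he hf hef

end Constructions

section Semantics

variable [Nonempty P] [Nonempty M] {g1 g2 : GC P M} {E : ES P M}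

lemma gsem_seq_eq_some (h : gsem (.seq g1 g2) = some E) :
    ∃ E1 E2, gsem g1 = some E1 ∧ gsem g2 = some E2 ∧ E = esSeq E1 E2 := by
  simp only [gsem] at h
  split at h <;> simp_all

lemma gsem_par_eq_some (h : gsem (.par g1 g2) = some E) :
    ∃ E1 E2, gsem g1 = some E1 ∧ gsem g2 = some E2 ∧ E = esTensor E1 E2 := by
  simp only [gsem] at h
  split at h <;> simp_all

lemma gsem_cho_eq_some (h : gsem (.cho g1 g2) = some E) :
    ∃ E1 E2, gsem g1 = some E1 ∧ gsem g2 = some E2 ∧ E = esSum E1 E2 := by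
  simp only [gsem] at h
  split at h <;> simp_all

lemma Typing.wellTyped_gsem {Γ : Set P} {G : GC P M} {φ Λ : Set (Label P M)}
    (h : Typing Γ G φ Λ) {E : ES P M} (hE : gsem G = some E) : WellTyped Γ E := by
  induction h generalizing E with
  | temp =>
    obtain rfl : esEmpty = E := Option.some.inj hE
    exact wellTyped_esEmpty
  | tint hab =>
    simp only [gsem, if_neg hab, Option.some.injEq] at hE
    exact hE ▸ wellTyped_esAct _ hab
  | tseq _ _ ih1 ih2 =>
    obtain ⟨E1, E2, h1, h2, rfl⟩ := gsem_seq_eq_some hE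
    exact wellTyped_esSeq (ih1 h1) (ih2 h2)
  | tpar _ _ hΓ ih1 ih2 =>
    obtain ⟨E1, E2, h1, h2, rfl⟩ := gsem_par_eq_some hE
    exact wellTyped_esTensor (ih1 h1) (ih2 h2) hΓ
  | tch _ _ _ ih1 ih2 =>
    obtain ⟨E1, E2, h1, h2, rfl⟩ := gsem_cho_eq_some hE
    exact wellTyped_esSum (ih1 h1) (ih2 h2)

end Semantics

/-- If `Π ⊢ G : ⟨φ,Λ⟩` is derivable then for every maximal configuration `x` of `⟦G⟧`
and every participant `A`, the set of maximal events of `x↾A` is empty or a singleton. -/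
theorem typable_max_proj_subsingleton {P M : Type} [Infinite P] [Infinite M]
    {Γ : Set P} {G : GC P M} {φ Λ : Set (Label P M)}
    (h : Typing Γ G φ Λ) :
    ∀ E : ES P M, gsem G = some E → ∀ x ∈ E.MaxC, ∀ A : P,
      E.maxIn (E.projC x A) = ∅ ∨ ∃ e : ℕ, E.maxIn (E.projC x A) = {e} :=
  fun _ hE _ hx A =>
    ((h.wellTyped_gsem hE).projTotal.maxIn_projC_subsingleton hx.1 A).eq_empty_or_singleton

end Choreo
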